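/- arXiv:2112.09044 — 4 statements merged into one kernel-verified Lean document; each statement's English description precedes it below -/
import Mathlib

section
/- If a Borel probability measure μ on ℝ^d is (2^{−m}, s, m^{−2})-robust for all integers m ≥ m₀, then every Borel set X with μ(X) > 0 has positive s-dimensional Hausdorff measure, and hence Hausdorff dimension at least s. -/
open MeasureTheory Metric Set
open scoped ENNReal

/-- The dyadic cube of side `2^{-m}` indexed by `k : Fin d → ℤ`. -/
def dyadicCube (d m : ℕ) (k : Fin d → ℤ) : Set (EuclideanSpace ℝ (Fin d)) :=
  {x | ∀ i, (k i : ℝ) * (2:ℝ) ^ (-(m:ℝ)) ≤ x i ∧ x i < ((k i : ℝ) + 1) * (2:ℝ) ^ (-(m:ℝ))}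

/-- The number (in `ℕ∞`) of dyadic cubes of side `2^{-m}` intersecting `X`. -/
noncomputable def cubeCount (d m : ℕ) (X : Set (EuclideanSpace ℝ (Fin d))) : ℕ∞ :=
  {k : Fin d → ℤ | (dyadicCube d m k ∩ X).Nonempty}.encard

/-- `μ` is `(2^{-m}, s, r)`-robust: any Borel set of measure `> r` meets more than
`(2^{-m})^{-s} = 2^{ms}` dyadic cubes of side `2^{-m}`. -/
def IsRobust (d : ℕ) (μ : Measure (EuclideanSpace ℝ (Fin d))) (m : ℕ) (s r : ℝ) : Prop :=
  ∀ X : Set (EuclideanSpace ℝ (Fin d)), MeasurableSet X → ENNReal.ofReal r < μ X →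
    ENNReal.ofReal ((2:ℝ) ^ ((m:ℝ) * s)) < (cubeCount d m X : ℝ≥0∞)

/-!
If `μH[s] X = 0` with `s > 0`, then `X` is covered by sets `t n` of diameters at most `2^{-m n}`,
`m n ≥ M`, with `∑ 2^{-s m n} ≤ 3^{-d}`; sets of diameter zero are free in the Hausdorff sum, so
their scales are simply taken fine enough. A set of diameter at most `2^{-m}` meets at most `3^d`
dyadic cubes of side `2^{-m}`, so the sets at scale `m` together meet at most `2^{ms}` of them, and
robustness bounds the measure of their union by `m^{-2}`. Summing over `m ≥ M` gives
`μ X ≤ ∑_{m ≥ M} m^{-2}`, which is less than `μ X` once `M` is large. For `s ≤ 0` only the empty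
set is `μH[s]`-null.
-/

open Filter Topology

lemma Int.floor_mem_Icc_of_abs_sub_le_one {α : Type*} [CommRing α] [LinearOrder α]
    [IsStrictOrderedRing α] [FloorRing α] {u v : α} (h : |u - v| ≤ 1) :
    ⌊u⌋ ∈ Icc (⌊v⌋ - 1) (⌊v⌋ + 1) := by
  obtain ⟨h₁, h₂⟩ := abs_le.1 h
  rw [← Int.floor_sub_one, ← Int.floor_add_one]
  exact ⟨Int.floor_le_floor (by linarith), Int.floor_le_floor (by linarith)⟩

lemma exists_dyadic_scale {a : ℝ≥0∞} {M : ℕ} (ha : a ≤ 2⁻¹ ^ M) {s : ℝ} (hs : 0 < s)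
    {η : ℝ≥0∞} (hη : η ≠ 0) :
    ∃ m, M ≤ m ∧ a ≤ 2⁻¹ ^ m ∧ ((2⁻¹ : ℝ≥0∞) ^ m) ^ s ≤ 2 ^ s * a ^ s + η := by
  classical
  rcases eq_or_ne a 0 with rfl | ha₀
  · have hlim : Tendsto (fun m : ℕ => ((2⁻¹ : ℝ≥0∞) ^ m) ^ s) atTop (𝓝 0) := by
      have h := ((ENNReal.continuous_rpow_const (y := s)).tendsto 0).comp
        (ENNReal.tendsto_pow_atTop_nhds_zero_of_lt_one (ENNReal.inv_lt_one.2 ENNReal.one_lt_two))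
      rwa [ENNReal.zero_rpow_of_pos hs] at h
    obtain ⟨m, hMm, hm⟩ := ((eventually_ge_atTop M).and
      (hlim.eventually (gt_mem_nhds (pos_iff_ne_zero.2 hη)))).exists
    exact ⟨m, hMm, zero_le, hm.le.trans le_add_self⟩
  -- take `m` maximal with `a ≤ 2⁻¹ ^ m`, so that `2⁻¹ ^ m < 2 * a`
  obtain ⟨j, hj⟩ := ENNReal.exists_inv_two_pow_lt ha₀
  have hMj : M ≤ j := by
    by_contra! h
    exact hj.not_ge (ha.trans (pow_le_pow_of_le_one zero_le (ENNReal.inv_le_one.2 one_le_two) h.le))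
  set m := Nat.findGreatest (fun m => a ≤ 2⁻¹ ^ m) j
  have hm : a ≤ 2⁻¹ ^ m := Nat.findGreatest_spec (P := fun m => a ≤ 2⁻¹ ^ m) hMj ha
  have hmj : m < j := (Nat.findGreatest_le j).lt_of_ne fun h => hj.not_ge (h ▸ hm)
  have hlt : 2⁻¹ ^ (m + 1) < a := not_le.1 (Nat.findGreatest_is_greatest m.lt_succ_self hmj)
  refine ⟨m, Nat.le_findGreatest hMj ha, hm, le_add_right ?_⟩
  calc ((2⁻¹ : ℝ≥0∞) ^ m) ^ s = (2 * 2⁻¹ ^ (m + 1)) ^ s := by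
        rw [pow_succ, mul_left_comm, ENNReal.mul_inv_cancel two_ne_zero ENNReal.ofNat_ne_top,
          mul_one]
    _ ≤ (2 * a) ^ s := by gcongr
    _ = 2 ^ s * a ^ s := ENNReal.mul_rpow_of_nonneg _ _ hs.le

section HausdorffMeasure

variable {E : Type*} [EMetricSpace E] [MeasurableSpace E] [BorelSpace E]

theorem exists_closed_dyadic_cover_of_hausdorffMeasure_eq_zero {s : ℝ} (hs : 0 < s)
    {X : Set E} (hX : μH[s] X = 0) (M : ℕ) {ε : ℝ≥0∞} (hε : ε ≠ 0) :
    ∃ (t : ℕ → Set E) (sc : ℕ → ℕ), (∀ n, IsClosed (t n)) ∧ X ⊆ ⋃ n, t n ∧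
      (∀ n, M ≤ sc n) ∧ (∀ n, ediam (t n) ≤ 2⁻¹ ^ sc n) ∧
      ∑' n, ((2⁻¹ : ℝ≥0∞) ^ sc n) ^ s ≤ ε := by
  have h2s : (2 : ℝ≥0∞) ^ s ≠ 0 := (ENNReal.rpow_pos two_pos ENNReal.ofNat_ne_top).ne'
  have h2s' : (2 : ℝ≥0∞) ^ s ≠ ⊤ := ENNReal.rpow_ne_top_of_nonneg hs.le ENNReal.ofNat_ne_top
  obtain ⟨t, hXt, htM, htsum⟩ : ∃ t : ℕ → Set E, X ⊆ ⋃ n, t n ∧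
      (∀ n, ediam (t n) ≤ 2⁻¹ ^ M) ∧
      ∑' n, (⨆ _ : (t n).Nonempty, ediam (t n) ^ s) < (2 ^ s)⁻¹ * (ε / 2) := by
    rw [Measure.hausdorffMeasure_apply, ENNReal.iSup_eq_zero] at hX
    have h := ENNReal.iSup_eq_zero.1 (hX (2⁻¹ ^ M))
      (ENNReal.pow_pos (ENNReal.inv_pos.2 ENNReal.ofNat_ne_top) M)
    have hpos : 0 < (2 ^ s : ℝ≥0∞)⁻¹ * (ε / 2) := by
      simp [pos_iff_ne_zero, h2s', hε]
    rw [← h] at hpos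
    simpa only [iInf_lt_iff, exists_prop] using hpos
  obtain ⟨η, hη, hηsum⟩ := ENNReal.exists_pos_sum_of_countable (ENNReal.half_pos hε).ne' ℕ
  choose sc hMsc hdiam hsc using fun n =>
    exists_dyadic_scale (htM n) hs (ENNReal.coe_ne_zero.2 (hη n).ne')
  have hterm : ∀ n, ediam (t n) ^ s ≤ (⨆ _ : (t n).Nonempty, ediam (t n) ^ s) := fun n => by
    rcases (t n).eq_empty_or_nonempty with h | h
    · simp [h, ENNReal.zero_rpow_of_pos hs]
    · exact le_iSup_of_le h le_rfl
  refine ⟨fun n => closure (t n), sc, fun n => isClosed_closure,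
    hXt.trans (iUnion_mono fun n => subset_closure), hMsc,
    fun n => (ediam_closure (t n)).trans_le (hdiam n), ?_⟩
  calc ∑' n, ((2⁻¹ : ℝ≥0∞) ^ sc n) ^ s
      ≤ ∑' n, (2 ^ s * (⨆ _ : (t n).Nonempty, ediam (t n) ^ s) + η n) :=
        ENNReal.tsum_le_tsum fun n => (hsc n).trans (by gcongr; exact hterm n)
    _ = 2 ^ s * (∑' n, ⨆ _ : (t n).Nonempty, ediam (t n) ^ s) + ∑' n, (η n : ℝ≥0∞) := by
        rw [ENNReal.tsum_add, ENNReal.tsum_mul_left]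
    _ ≤ 2 ^ s * ((2 ^ s)⁻¹ * (ε / 2)) + ε / 2 := by gcongr
    _ = ε := by rw [← mul_assoc, ENNReal.mul_inv_cancel h2s h2s', one_mul, ENNReal.add_halves]

lemma absolutelyContinuous_hausdorffMeasure_of_nonpos {s : ℝ} (hs : s ≤ 0) (μ : Measure E) :
    μ ≪ μH[s] := by
  intro X hX
  have hX_empty : X = ∅ := not_nonempty_iff_eq_empty.1 fun hne => by
    simpa [hX] using (Measure.one_le_hausdorffMeasure_zero_of_nonempty hne).trans
      (Measure.hausdorffMeasure_mono hs X)
  rw [hX_empty, measure_empty]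

lemma ofReal_le_dimH_of_hausdorffMeasure_ne_zero {s : ℝ} {X : Set E} (h : μH[s] X ≠ 0) :
    ENNReal.ofReal s ≤ dimH X := by
  rcases le_or_gt s 0 with hs | hs
  · simp [ENNReal.ofReal_eq_zero.2 hs]
  · exact le_dimH_of_hausdorffMeasure_ne_zero (d := s.toNNReal)
      (by rwa [Real.coe_toNNReal s hs.le])

end HausdorffMeasure

section DyadicCubes

variable {d m : ℕ}

lemma mem_dyadicCube_iff {k : Fin d → ℤ} {x : EuclideanSpace ℝ (Fin d)} :
    x ∈ dyadicCube d m k ↔ ∀ i, ⌊x i * 2 ^ m⌋ = k i := by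
  have h2 : (0:ℝ) < 2 ^ m := by positivity
  simp only [dyadicCube, mem_ofPred_eq, Int.floor_eq_iff, Real.rpow_neg zero_le_two,
    Real.rpow_natCast, mul_inv_le_iff₀ h2, lt_mul_inv_iff₀ h2]

lemma cubeCount_le_three_pow {t : Set (EuclideanSpace ℝ (Fin d))} (ht : ediam t ≤ 2⁻¹ ^ m) :
    cubeCount d m t ≤ 3 ^ d := by
  rcases t.eq_empty_or_nonempty with rfl | ⟨y, hy⟩
  · simp [cubeCount]
  have hscale : (2⁻¹ : ℝ≥0∞) ^ m = ENNReal.ofReal ((2 ^ m)⁻¹) := by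
    rw [ENNReal.ofReal_inv_of_pos (by positivity), ENNReal.ofReal_pow zero_le_two,
      ENNReal.ofReal_ofNat, ENNReal.inv_pow]
  have hsub : {k | (dyadicCube d m k ∩ t).Nonempty} ⊆
      Fintype.piFinset fun i => Finset.Icc (⌊y i * 2 ^ m⌋ - 1) (⌊y i * 2 ^ m⌋ + 1) := by
    rintro k ⟨x, hxk, hxt⟩
    simp only [Finset.mem_coe, Fintype.mem_piFinset, Finset.mem_Icc]
    intro i
    have hdist : |x i - y i| ≤ (2 ^ m)⁻¹ := by
      rw [← Real.dist_eq, ← edist_le_ofReal (by positivity), ← hscale]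
      exact (PiLp.edist_apply_le x y i).trans ((edist_le_ediam_of_mem hxt hy).trans ht)
    rw [← mem_dyadicCube_iff.1 hxk i]
    refine Int.floor_mem_Icc_of_abs_sub_le_one (α := ℝ) ?_
    rwa [← sub_mul, abs_mul, abs_of_pos (by positivity : (0:ℝ) < 2 ^ m),
      ← le_mul_inv_iff₀ (by positivity), one_mul]
  refine (encard_le_encard hsub).trans ?_
  rw [encard_coe_eq_coe_finsetCard]
  simp [show ∀ a : ℤ, a + 1 + 1 - (a - 1) = 3 by omega]

lemma cubeCount_iUnion_le {ι : Type*} [Countable ι] (t : ι → Set (EuclideanSpace ℝ (Fin d))) :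
    (cubeCount d m (⋃ n, t n) : ℝ≥0∞) ≤ ∑' n, (cubeCount d m (t n) : ℝ≥0∞) := by
  simp only [cubeCount, ← Measure.count_apply (to_countable _).measurableSet, inter_iUnion,
    nonempty_iUnion]
  rw [ofPred_exists]
  exact measure_iUnion_le _

end DyadicCubes

lemma ofReal_two_rpow_eq_inv (m : ℕ) (s : ℝ) :
    ENNReal.ofReal ((2:ℝ) ^ ((m:ℝ) * s)) = (((2⁻¹ : ℝ≥0∞) ^ m) ^ s)⁻¹ := by
  rw [← ENNReal.inv_rpow, ENNReal.inv_pow, inv_inv, ← ENNReal.rpow_natCast, ← ENNReal.rpow_mul,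
    ← ENNReal.ofReal_rpow_of_pos two_pos, ENNReal.ofReal_ofNat]

lemma cubeCount_iUnion_of_scale_eq_le {d : ℕ} {s : ℝ}
    {t : ℕ → Set (EuclideanSpace ℝ (Fin d))} {sc : ℕ → ℕ}
    (hdiam : ∀ n, ediam (t n) ≤ 2⁻¹ ^ sc n)
    (hsum : ∑' n, ((2⁻¹ : ℝ≥0∞) ^ sc n) ^ s ≤ ((3 : ℝ≥0∞) ^ d)⁻¹) (m : ℕ) :
    (cubeCount d m (⋃ n : {n // sc n = m}, t n) : ℝ≥0∞) ≤
      ENNReal.ofReal (2 ^ ((m:ℝ) * s)) := by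
  set w : ℝ≥0∞ := ((2⁻¹ : ℝ≥0∞) ^ m) ^ s
  have hw : w⁻¹ * w = 1 := ENNReal.inv_mul_cancel (by simp [w]) (by simp [w])
  rw [ofReal_two_rpow_eq_inv]
  calc (cubeCount d m (⋃ n : {n // sc n = m}, t n) : ℝ≥0∞)
      ≤ ∑' n : {n // sc n = m}, (cubeCount d m (t n) : ℝ≥0∞) := cubeCount_iUnion_le _
    _ ≤ ∑' n : {n // sc n = m}, 3 ^ d * w⁻¹ * ((2⁻¹ : ℝ≥0∞) ^ sc n) ^ s := by
        refine ENNReal.tsum_le_tsum fun n => ?_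
        rw [n.2, mul_assoc, hw, mul_one]
        exact_mod_cast cubeCount_le_three_pow (n.2 ▸ hdiam n)
    _ ≤ ∑' n, 3 ^ d * w⁻¹ * ((2⁻¹ : ℝ≥0∞) ^ sc n) ^ s :=
        ENNReal.tsum_comp_le_tsum_of_injective Subtype.val_injective
          fun n => 3 ^ d * w⁻¹ * ((2⁻¹ : ℝ≥0∞) ^ sc n) ^ s
    _ ≤ 3 ^ d * w⁻¹ * ((3 : ℝ≥0∞) ^ d)⁻¹ := by rw [ENNReal.tsum_mul_left]; gcongr
    _ = w⁻¹ := by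
        rw [mul_comm, ← mul_assoc, ENNReal.inv_mul_cancel (by positivity)
          (ENNReal.pow_ne_top ENNReal.ofNat_ne_top), one_mul]

lemma IsRobust.measure_le {d m : ℕ} {μ : Measure (EuclideanSpace ℝ (Fin d))} {s r : ℝ}
    (h : IsRobust d μ m s r) {Y : Set (EuclideanSpace ℝ (Fin d))} (hY : MeasurableSet Y)
    (hc : (cubeCount d m Y : ℝ≥0∞) ≤ ENNReal.ofReal (2 ^ ((m:ℝ) * s))) :
    μ Y ≤ ENNReal.ofReal r :=
  not_lt.1 fun hr => (h Y hY hr).not_ge hc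

lemma tendsto_tsum_ofReal_inv_sq_add_atTop :
    Tendsto (fun M : ℕ => ∑' j : ℕ, ENNReal.ofReal ((((j + M : ℕ) : ℝ) ^ 2)⁻¹)) atTop (𝓝 0) := by
  refine ENNReal.tendsto_sum_nat_add (fun n : ℕ => ENNReal.ofReal (((n : ℝ) ^ 2)⁻¹)) ?_
  rw [← ENNReal.ofReal_tsum_of_nonneg (fun _ => by positivity)
    (Real.summable_nat_pow_inv.2 one_lt_two)]
  exact ENNReal.ofReal_ne_top

theorem absolutelyContinuous_hausdorffMeasure_of_isRobust {d : ℕ}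
    {μ : Measure (EuclideanSpace ℝ (Fin d))} {s : ℝ} (hs : 0 < s) {m₀ : ℕ}
    (hrob : ∀ m : ℕ, m₀ ≤ m → IsRobust d μ m s (((m:ℝ) ^ 2)⁻¹)) : μ ≪ μH[s] := by
  intro X hX
  by_contra hμX
  obtain ⟨M, hm₀M, htail⟩ := ((eventually_ge_atTop m₀).and
    (tendsto_tsum_ofReal_inv_sq_add_atTop.eventually (gt_mem_nhds (pos_iff_ne_zero.2 hμX)))).exists
  obtain ⟨t, sc, htc, hXt, hMsc, hdiam, hsum⟩ :=
    exists_closed_dyadic_cover_of_hausdorffMeasure_eq_zero hs hX M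
      (by simp : ((3:ℝ≥0∞) ^ d)⁻¹ ≠ 0)
  let T : ℕ → Set (EuclideanSpace ℝ (Fin d)) := fun m => ⋃ n : {n // sc n = m}, t n
  have hXT : X ⊆ ⋃ j : ℕ, T (j + M) := fun x hx => by
    obtain ⟨n, hn⟩ := mem_iUnion.1 (hXt hx)
    exact mem_iUnion.2 ⟨sc n - M, mem_iUnion.2 ⟨⟨n, (Nat.sub_add_cancel (hMsc n)).symm⟩, hn⟩⟩
  have hT : ∀ j, μ (T (j + M)) ≤ ENNReal.ofReal ((((j + M : ℕ) : ℝ) ^ 2)⁻¹) := fun j =>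
    (hrob _ (by omega)).measure_le (MeasurableSet.iUnion fun n => (htc n).measurableSet)
      (cubeCount_iUnion_of_scale_eq_le hdiam hsum _)
  exact ((measure_mono hXT).trans ((measure_iUnion_le _).trans
    (ENNReal.tsum_le_tsum hT))).not_gt htail

theorem hausdorff_of_robust_general {d : ℕ} (μ : Measure (EuclideanSpace ℝ (Fin d)))
    (s : ℝ) (m₀ : ℕ)
    (hrob : ∀ m : ℕ, m₀ ≤ m → IsRobust d μ m s (((m:ℝ) ^ 2)⁻¹)) :
    ∀ X : Set (EuclideanSpace ℝ (Fin d)), MeasurableSet X → 0 < μ X →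
      0 < μH[s] X ∧ ENNReal.ofReal s ≤ dimH X := by
  intro X _ hX
  have hμ : μ ≪ μH[s] := by
    rcases le_or_gt s 0 with hs | hs
    · exact absolutelyContinuous_hausdorffMeasure_of_nonpos hs μ
    · exact absolutelyContinuous_hausdorffMeasure_of_isRobust hs hrob
  have hH : μH[s] X ≠ 0 := mt (@hμ X) hX.ne'
  exact ⟨pos_iff_ne_zero.2 hH, ofReal_le_dimH_of_hausdorffMeasure_ne_zero hH⟩

/-- If a probability measure `μ` on `ℝ^d` is `(2^{-m}, s, m^{-2})`-robust for all `m ≥ m₀`,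
then every Borel set of positive `μ`-measure has positive `s`-dimensional Hausdorff measure,
hence Hausdorff dimension at least `s`. -/
theorem hausdorff_of_robust {d : ℕ} (μ : Measure (EuclideanSpace ℝ (Fin d)))
    [IsProbabilityMeasure μ] (s : ℝ) (m₀ : ℕ)
    (hrob : ∀ m : ℕ, m₀ ≤ m → IsRobust d μ m s (((m:ℝ) ^ 2)⁻¹)) :
    ∀ X : Set (EuclideanSpace ℝ (Fin d)), MeasurableSet X → 0 < μ X →
      0 < μH[s] X ∧ ENNReal.ofReal s ≤ dimH X :=
  hausdorff_of_robust_general μ s m₀ hrob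
end

section
/- Let ρ be a probability measure on S^{d−1} with ρ(H^{(a)}) ≤ b for all linear hyperplanes H, and suppose Θ ⊂ S^{d−1} satisfies ρ(Θ) > b. Then there exist directions θ₁, …, θ_d ∈ Θ such that for each i, the distance from θ_{i+1} to the linear span of θ₁,…,θ_i is at least a. -/
open MeasureTheory Metric Set
open scoped ENNReal

/-!
Since `ρ(Θ) > b ≥ ρ(H^{(a)})`, the set `Θ` is not contained in the `a`-thickening of any
hyperplane, so it has a point at distance at least `a` from any hyperplane, hence from any
proper subspace (which lies in some hyperplane). The directions are then chosen greedily: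
the span of the first `i < d` of them has dimension at most `i`, so it is proper.
-/

open Module Submodule

theorem Submodule.exists_finrank_eq_sub_one_le {K V : Type*} [DivisionRing K] [AddCommGroup V]
    [Module K V] [FiniteDimensional K V] (W : Submodule K V) (hW : finrank K W < finrank K V) :
    ∃ H : Submodule K V, finrank K H = finrank K V - 1 ∧ W ≤ H := by
  obtain ⟨f, hf, hWf⟩ := W.exists_le_ker_of_lt_top (lt_top_of_finrank_lt_finrank hW)
  refine ⟨LinearMap.ker f, ?_, hWf⟩
  have := Module.Dual.finrank_ker_add_one_of_ne_zero hf
  omega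

theorem exists_mem_le_infDist_of_forall_not_subset_thickening {K E : Type*} [DivisionRing K]
    [AddCommGroup E] [Module K E] [FiniteDimensional K E] [PseudoMetricSpace E]
    {Θ : Set E} {a : ℝ}
    (hΘ : ∀ H : Submodule K E, finrank K H = finrank K E - 1 → ¬Θ ⊆ thickening a H)
    (W : Submodule K E) (hW : finrank K W < finrank K E) :
    ∃ θ ∈ Θ, a ≤ infDist θ W := by
  obtain ⟨H, hH, hWH⟩ := W.exists_finrank_eq_sub_one_le hW
  obtain ⟨θ, hθΘ, hθH⟩ := not_subset.1 (hΘ H hH)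
  refine ⟨θ, hθΘ, ?_⟩
  calc a ≤ infDist θ H :=
        not_lt.1 fun h => hθH ((mem_thickening_iff_infDist_lt ⟨0, H.zero_mem⟩).2 h)
    _ ≤ infDist θ W := infDist_le_infDist_of_subset hWH ⟨0, W.zero_mem⟩

section Greedy

variable {K V : Type*} [DivisionRing K] [AddCommGroup V] [Module K V] {n : ℕ}
  {P : Submodule K V → V → Prop}

theorem finrank_span_image_Iio_le (θ : ℕ → V) (k : ℕ) : finrank K (span K (θ '' Iio k)) ≤ k := by
  classical
  rw [← Finset.coe_range, ← Finset.coe_image]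
  exact (finrank_span_finset_le_card _).trans (Finset.card_image_le.trans (Finset.card_range k).le)

theorem exists_nat_seq_of_forall_finrank_lt
    (h : ∀ W : Submodule K V, finrank K W < n → ∃ x, P W x) :
    ∃ θ : ℕ → V, ∀ i < n, P (span K (θ '' Iio i)) (θ i) := by
  suffices ∀ k ≤ n, ∃ θ : ℕ → V, ∀ i < k, P (span K (θ '' Iio i)) (θ i) from this n le_rfl
  intro k
  induction k with
  | zero => exact fun _ => ⟨0, fun i hi => absurd hi i.not_lt_zero⟩
  | succ k ih =>
    intro hk
    obtain ⟨θ, hθ⟩ := ih (Nat.le_of_succ_le hk)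
    obtain ⟨x, hx⟩ := h _ ((finrank_span_image_Iio_le θ k).trans_lt hk)
    have himage : ∀ i ≤ k, Function.update θ k x '' Iio i = θ '' Iio i := fun i hi =>
      image_congr fun j hj => Function.update_of_ne (mem_Iio.1 hj |>.trans_le hi).ne _ _
    refine ⟨Function.update θ k x, fun i hi => ?_⟩
    rw [himage i (Nat.le_of_lt_succ hi)]
    rcases (Nat.le_of_lt_succ hi).lt_or_eq with hik | rfl
    · rw [Function.update_of_ne hik.ne]
      exact hθ i hik
    · rwa [Function.update_self]

theorem exists_fin_seq_of_forall_finrank_lt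
    (h : ∀ W : Submodule K V, finrank K W < n → ∃ x, P W x) :
    ∃ θ : Fin n → V, ∀ i, P (span K (θ '' {j | j < i})) (θ i) := by
  obtain ⟨θ, hθ⟩ := exists_nat_seq_of_forall_finrank_lt h
  refine ⟨fun i => θ i, fun i => ?_⟩
  have himage : (fun j : Fin n => θ j) '' {j | j < i} = θ '' Iio (i : ℕ) := by
    ext x
    constructor
    · rintro ⟨j, hj, rfl⟩
      exact ⟨j, hj, rfl⟩
    · rintro ⟨m, hm, rfl⟩
      exact ⟨⟨m, hm.trans i.isLt⟩, hm, rfl⟩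
  rw [himage]
  exact hθ i i.isLt

end Greedy

theorem exists_spread_directions_general (d : ℕ) (ρ : Measure (EuclideanSpace ℝ (Fin d)))
    (a b : ℝ)
    (hH : ∀ H : Submodule ℝ (EuclideanSpace ℝ (Fin d)), Module.finrank ℝ H = d - 1 →
      ρ (Metric.thickening a (H : Set (EuclideanSpace ℝ (Fin d)))) ≤ ENNReal.ofReal b)
    (Θ : Set (EuclideanSpace ℝ (Fin d)))
    (hΘ : ENNReal.ofReal b < ρ Θ) :
    ∃ θ : Fin d → EuclideanSpace ℝ (Fin d), (∀ i, θ i ∈ Θ) ∧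
      ∀ i : Fin d, a ≤ Metric.infDist (θ i)
        ((Submodule.span ℝ (θ '' {j | j < i}) : Submodule ℝ (EuclideanSpace ℝ (Fin d))) :
          Set (EuclideanSpace ℝ (Fin d))) := by
  have hΘH : ∀ H : Submodule ℝ (EuclideanSpace ℝ (Fin d)),
      finrank ℝ H = finrank ℝ (EuclideanSpace ℝ (Fin d)) - 1 → ¬Θ ⊆ thickening a H :=
    fun H hHd hsub => ((measure_mono hsub).trans
      (hH H (by rwa [finrank_euclideanSpace_fin] at hHd))).not_gt hΘ
  obtain ⟨θ, hθ⟩ := exists_fin_seq_of_forall_finrank_lt (n := d)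
    (P := fun W x => x ∈ Θ ∧ a ≤ infDist x W) fun W hW =>
      exists_mem_le_infDist_of_forall_not_subset_thickening hΘH W
        (by rwa [finrank_euclideanSpace_fin])
  exact ⟨θ, fun i => (hθ i).1, fun i => (hθ i).2⟩

/-- If `ρ` is a probability measure on `S^{d-1}` with `ρ(H^{(a)}) ≤ b` for every linear
hyperplane `H`, and `Θ ⊆ S^{d-1}` satisfies `ρ(Θ) > b`, then one can find directions
`θ₁, …, θ_d ∈ Θ` such that each `θ_{i+1}` is at distance at least `a` from the linear span
of `θ₁, …, θ_i`. -/
theorem exists_spread_directions (d : ℕ) (ρ : Measure (EuclideanSpace ℝ (Fin d)))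
    [IsProbabilityMeasure ρ]
    (hsph : ρ (Metric.sphere (0 : EuclideanSpace ℝ (Fin d)) 1)ᶜ = 0)
    (a b : ℝ) (ha : 0 < a)
    (hH : ∀ H : Submodule ℝ (EuclideanSpace ℝ (Fin d)), Module.finrank ℝ H = d - 1 →
      ρ (Metric.thickening a (H : Set (EuclideanSpace ℝ (Fin d)))) ≤ ENNReal.ofReal b)
    (Θ : Set (EuclideanSpace ℝ (Fin d))) (hΘmeas : MeasurableSet Θ)
    (hΘsph : Θ ⊆ Metric.sphere (0 : EuclideanSpace ℝ (Fin d)) 1)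
    (hΘ : ENNReal.ofReal b < ρ Θ) :
    ∃ θ : Fin d → EuclideanSpace ℝ (Fin d), (∀ i, θ i ∈ Θ) ∧
      ∀ i : Fin d, a ≤ Metric.infDist (θ i)
        ((Submodule.span ℝ (θ '' {j | j < i}) : Submodule ℝ (EuclideanSpace ℝ (Fin d))) :
          Set (EuclideanSpace ℝ (Fin d))) :=
  exists_spread_directions_general d ρ a b hH Θ hΘ
end

section
/- Let a₁ < a₂ < … < a_{J+1} and let f: [a₁, a_{J+1}] → ℝ be such that f is σ_j-superlinear on [a_j, a_{j+1}] for each j. Then there exists a decomposition of [a₁, a_{J+1}] into consecutive intervals [a'_k, a'_{k+1}] (each being a union of consecutive original intervals) and numbers σ'_k such that f is σ'_k-superlinear on [a'_k, a'_{k+1}], the sequence (σ'_k) is strictly increasing, and Σ_k σ'_k (a'_{k+1} − a'_k) = Σ_j σ_j (a_{j+1} − a_j). -/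
/-- `f` is `σ`-superlinear on `[a,b]`: `f(x) ≥ f(a) + σ(x-a)` for all `x ∈ [a,b]`. -/
def Superlinear (f : ℝ → ℝ) (a b σ : ℝ) : Prop :=
  ∀ x ∈ Set.Icc a b, f a + σ * (x - a) ≤ f x

lemma chain_lt {α : Type*} [Preorder α] (g : ℕ → α) (N : ℕ)
    (h : ∀ k < N, g k < g (k+1)) : ∀ m n, m < n → n ≤ N → g m < g n := by
  intro m n hmn hnN
  induction n with
  | zero => omega
  | succ n ih =>
    rcases Nat.lt_succ_iff_lt_or_eq.mp hmn with h' | h'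
    · exact lt_trans (ih h' (by omega)) (h n (by omega))
    · exact h' ▸ h m (by omega)

lemma chain_le {α : Type*} [Preorder α] (g : ℕ → α) (N : ℕ)
    (h : ∀ k < N, g k < g (k+1)) : ∀ m n, m ≤ n → n ≤ N → g m ≤ g n := by
  intro m n hmn hnN
  rcases eq_or_lt_of_le hmn with rfl | h'
  · exact le_refl _
  · exact le_of_lt (chain_lt g N h m n h' hnN)

lemma superlinear_merge (f : ℝ → ℝ) (A B C σ₁ σ₂ : ℝ) (hab : A < B) (hbc : B < C)
    (h21 : σ₂ ≤ σ₁) (h1 : Superlinear f A B σ₁) (h2 : Superlinear f B C σ₂) :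
    Superlinear f A C ((σ₁ * (B - A) + σ₂ * (C - B)) / (C - A)) ∧
    σ₂ ≤ (σ₁ * (B - A) + σ₂ * (C - B)) / (C - A) ∧
    (σ₁ * (B - A) + σ₂ * (C - B)) / (C - A) ≤ σ₁ := by
  set σ := (σ₁ * (B - A) + σ₂ * (C - B)) / (C - A) with hσ
  have hCA : 0 < C - A := by linarith
  have hkey : σ * (C - A) = σ₁ * (B - A) + σ₂ * (C - B) := by
    rw [hσ]; field_simp
  have hs2 : σ₂ ≤ σ := by nlinarith
  have hs1 : σ ≤ σ₁ := by nlinarith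
  refine ⟨?_, hs2, hs1⟩
  intro x hx
  obtain ⟨hx1, hx2⟩ := hx
  rcases le_total x B with hxb | hbx
  · have := h1 x ⟨hx1, hxb⟩
    nlinarith [mul_le_mul_of_nonneg_right hs1 (by linarith : (0:ℝ) ≤ x - A)]
  · have h2x := h2 x ⟨hbx, hx2⟩
    have hB := h1 B ⟨le_of_lt hab, le_refl B⟩
    nlinarith [mul_le_mul_of_nonneg_right hs2 (by linarith : (0:ℝ) ≤ C - x)]

lemma superlinear_fixup (f : ℝ → ℝ) : ∀ K : ℕ, 1 ≤ K → ∀ (b τ : ℕ → ℝ),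
    (∀ k < K, b k < b (k+1)) →
    (∀ k, k+2 < K → τ k < τ (k+1)) →
    (∀ k < K, Superlinear f (b k) (b (k+1)) (τ k)) →
    ∃ (K' : ℕ) (ψ : ℕ → ℕ) (τ' : ℕ → ℝ), 1 ≤ K' ∧ ψ 0 = 0 ∧ ψ K' = K ∧
      (∀ k < K', ψ k < ψ (k+1)) ∧
      (∀ k < K', Superlinear f (b (ψ k)) (b (ψ (k+1))) (τ' k)) ∧
      (∀ k, k+1 < K' → τ' k < τ' (k+1)) ∧
      (∑ k ∈ Finset.range K', τ' k * (b (ψ (k+1)) - b (ψ k))) =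
        ∑ k ∈ Finset.range K, τ k * (b (k+1) - b k) := by
  intro K
  induction K using Nat.strong_induction_on with
  | _ K IH =>
  intro hK b τ hb hinc hsl
  match K, hK with
  | 1, _ =>
    exact ⟨1, id, τ, le_refl _, rfl, rfl, fun k hk => by simp only [id_eq]; omega,
      fun k hk => hsl k hk, fun k hk => by omega, rfl⟩
  | (n+2), _ =>
    by_cases hlt : τ n < τ (n+1)
    · refine ⟨n+2, id, τ, by omega, rfl, rfl, fun k hk => by simp only [id_eq]; omega,
        fun k hk => hsl k hk, ?_, rfl⟩
      intro k hk
      rcases Nat.lt_or_ge (k+2) (n+2) with h | h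
      · exact hinc k h
      · have : k = n := by omega
        exact this ▸ hlt
    · push_neg at hlt
      have hbn : b n < b (n+1) := hb n (by omega)
      have hbn1 : b (n+1) < b (n+2) := hb (n+1) (by omega)
      obtain ⟨hmsl, hm2, hm1⟩ := superlinear_merge f (b n) (b (n+1)) (b (n+2))
        (τ n) (τ (n+1)) hbn hbn1 hlt (hsl n (by omega)) (hsl (n+1) (by omega))
      set τ'' := (τ n * (b (n+1) - b n) + τ (n+1) * (b (n+2) - b (n+1))) / (b (n+2) - b n)
        with hτ''
      set b' : ℕ → ℝ := fun k => if k = n+1 then b (n+2) else b k with hb'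
      set τn : ℕ → ℝ := fun k => if k = n then τ'' else τ k with hτn
      have hb'1 : ∀ k < n+1, b' k < b' (k+1) := by
        intro k hk
        by_cases h : k+1 = n+1
        · have hk' : k = n := by omega
          simp only [hb', if_pos h, if_neg (by omega : k ≠ n+1)]
          rw [hk']
          exact lt_trans hbn hbn1
        · simp only [hb', if_neg h, if_neg (by omega : k ≠ n+1)]
          exact hb k (by omega)
      have hinc' : ∀ k, k+2 < n+1 → τn k < τn (k+1) := by
        intro k hk
        simp only [hτn, if_neg (by omega : k ≠ n), if_neg (by omega : k+1 ≠ n)]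
        exact hinc k (by omega)
      have hsl' : ∀ k < n+1, Superlinear f (b' k) (b' (k+1)) (τn k) := by
        intro k hk
        by_cases h : k = n
        · rw [h]
          simp only [hb', hτn, if_pos rfl, if_neg (by omega : n ≠ n+1)]
          exact hmsl
        · simp only [hb', hτn, if_neg h, if_neg (by omega : k ≠ n+1),
            if_neg (by omega : k+1 ≠ n+1)]
          exact hsl k (by omega)
      obtain ⟨K', ψ, τ', hK', hψ0, hψK, hψmono, hsl2, hinc2, hsum2⟩ :=
        IH (n+1) (by omega) (by omega) b' τn hb'1 hinc' hsl'
      set ρ : ℕ → ℕ := fun j => if j = n+1 then n+2 else j with hρ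
      have hb'ρ : ∀ j, b' j = b (ρ j) := by
        intro j
        by_cases h : j = n+1 <;> simp [hb', hρ, h]
      have hψle : ∀ j ≤ K', ψ j ≤ n+1 := by
        intro j hj
        have := chain_le ψ K' hψmono j K' hj (le_refl _)
        omega
      refine ⟨K', ρ ∘ ψ, τ', hK', ?_, ?_, ?_, ?_, hinc2, ?_⟩
      · simp only [Function.comp, hψ0, hρ]
        rw [if_neg (by omega)]
      · simp only [Function.comp, hψK, hρ, if_pos rfl]
      · intro k hk
        have h1 := hψmono k hk
        have h2 := hψle (k+1) (by omega)
        simp only [Function.comp, hρ]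
        by_cases h : ψ (k+1) = n+1
        · rw [if_pos h, if_neg (by omega)]; omega
        · rw [if_neg h, if_neg (by omega)]; omega
      · intro k hk
        have := hsl2 k hk
        rwa [hb'ρ (ψ k), hb'ρ (ψ (k+1))] at this
      · have hrw : ∀ k, b (ρ (ψ k)) = b' (ψ k) := fun k => (hb'ρ (ψ k)).symm
        calc ∑ k ∈ Finset.range K', τ' k * (b ((ρ ∘ ψ) (k+1)) - b ((ρ ∘ ψ) k))
            = ∑ k ∈ Finset.range K', τ' k * (b' (ψ (k+1)) - b' (ψ k)) := by
              apply Finset.sum_congr rfl; intro k _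
              simp only [Function.comp]; rw [hrw, hrw]
          _ = ∑ k ∈ Finset.range (n+1), τn k * (b' (k+1) - b' k) := hsum2
          _ = ∑ k ∈ Finset.range (n+2), τ k * (b (k+1) - b k) := by
              rw [Finset.sum_range_succ, Finset.sum_range_succ (n := n+1),
                Finset.sum_range_succ (n := n)]
              have he : ∀ k ∈ Finset.range n, τn k * (b' (k+1) - b' k)
                  = τ k * (b (k+1) - b k) := by
                intro k hk
                rw [Finset.mem_range] at hk
                simp only [hτn, hb', if_neg (by omega : k ≠ n),
                  if_neg (by omega : k ≠ n+1), if_neg (by omega : k+1 ≠ n+1)]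
              rw [Finset.sum_congr rfl he]
              have hlast : τn n * (b' (n+1) - b' n)
                  = τ n * (b (n+1) - b n) + τ (n+1) * (b (n+2) - b (n+1)) := by
                simp only [hτn, hb', if_pos rfl, if_neg (by omega : n ≠ n+1), hτ'']
                have : b (n+2) - b n ≠ 0 := by
                  have : b n < b (n+2) := lt_trans hbn hbn1
                  linarith
                field_simp
              rw [hlast]; ring

/-- Merging into strictly increasing slopes: given consecutive intervals
`[a_j, a_{j+1}]`, `j < J`, on which `f` is `σ_j`-superlinear, there is a coarser
decomposition of `[a_0, a_J]` into consecutive intervals (each a union of consecutive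
original intervals, encoded by a strictly increasing reindexing `φ` with `φ 0 = 0` and
`φ K = J`) on which `f` is `σ'_k`-superlinear, with `(σ'_k)` strictly increasing and
`Σ_k σ'_k (a_{φ(k+1)} - a_{φ k}) = Σ_j σ_j (a_{j+1} - a_j)`. -/
theorem superlinear_merge_increasing (f : ℝ → ℝ) (J : ℕ) (hJ : 1 ≤ J)
    (a : ℕ → ℝ) (σ : ℕ → ℝ)
    (ha : ∀ j < J, a j < a (j + 1))
    (hf : ∀ j < J, Superlinear f (a j) (a (j + 1)) (σ j)) :
    ∃ (K : ℕ) (φ : ℕ → ℕ) (σ' : ℕ → ℝ),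
      1 ≤ K ∧ φ 0 = 0 ∧ φ K = J ∧
      (∀ k < K, φ k < φ (k + 1)) ∧
      (∀ k < K, Superlinear f (a (φ k)) (a (φ (k + 1))) (σ' k)) ∧
      (∀ k, k + 1 < K → σ' k < σ' (k + 1)) ∧
      (∑ k ∈ Finset.range K, σ' k * (a (φ (k + 1)) - a (φ k))) =
        (∑ j ∈ Finset.range J, σ j * (a (j + 1) - a j)) := by
  induction J, hJ using Nat.le_induction with
  | base =>
    exact ⟨1, id, σ, le_refl _, rfl, rfl, fun k hk => by simp only [id_eq]; omega,
      fun k hk => by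
        have : k = 0 := by omega
        subst this; exact hf 0 (by omega),
      fun k hk => by omega, rfl⟩
  | succ J hJ IH =>
    obtain ⟨K, φ, σ', hK, hφ0, hφK, hφmono, hsl, hinc, hsum⟩ :=
      IH (fun j hj => ha j (by omega)) (fun j hj => hf j (by omega))
    set φe : ℕ → ℕ := fun k => if k = K+1 then J+1 else φ k with hφe
    set σe : ℕ → ℝ := fun k => if k = K then σ J else σ' k with hσe
    have hφeK : φe (K+1) = J+1 := by simp [hφe]
    have hφe0 : φe 0 = 0 := by simp only [hφe, if_neg (by omega : (0:ℕ) ≠ K+1)]; exact hφ0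
    have hφele : ∀ k ≤ K, φ k ≤ J := by
      intro k hk
      have := chain_le φ K hφmono k K hk (le_refl _)
      omega
    have hφemono : ∀ k < K+1, φe k < φe (k+1) := by
      intro k hk
      by_cases h : k = K
      · rw [h]
        simp only [hφe, if_neg (by omega : K ≠ K+1), if_pos rfl, hφK]
        omega
      · simp only [hφe, if_neg (by omega : k ≠ K+1), if_neg (by omega : k+1 ≠ K+1)]
        exact hφmono k (by omega)
    have haJ : ∀ m n, m < n → n ≤ J+1 → a m < a n := chain_lt a (J+1) ha
    have hb : ∀ k < K+1, a (φe k) < a (φe (k+1)) := by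
      intro k hk
      apply haJ _ _ (hφemono k hk)
      by_cases h : k+1 = K+1
      · rw [h, hφeK]
      · simp only [hφe, if_neg h]
        have := hφele (k+1) (by omega)
        omega
    have hτinc : ∀ k, k+2 < K+1 → σe k < σe (k+1) := by
      intro k hk
      simp only [hσe, if_neg (by omega : k ≠ K), if_neg (by omega : k+1 ≠ K)]
      exact hinc k (by omega)
    have hslK : ∀ k < K+1, Superlinear f (a (φe k)) (a (φe (k+1))) (σe k) := by
      intro k hk
      by_cases h : k = K
      · rw [h]
        simp only [hσe, hφe, if_pos rfl, if_neg (by omega : K ≠ K+1), hφK, hφeK]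
        exact hf J (by omega)
      · simp only [hσe, hφe, if_neg h, if_neg (by omega : k ≠ K+1),
          if_neg (by omega : k+1 ≠ K+1)]
        exact hsl k (by omega)
    obtain ⟨K', ψ, τ', hK', hψ0, hψK, hψmono, hsl2, hinc2, hsum2⟩ :=
      superlinear_fixup f (K+1) (by omega) (fun k => a (φe k)) σe hb hτinc hslK
    have hψle : ∀ j ≤ K', ψ j ≤ K+1 := by
      intro j hj
      have := chain_le ψ K' hψmono j K' hj (le_refl _)
      omega
    refine ⟨K', φe ∘ ψ, τ', hK', ?_, ?_, ?_, hsl2, hinc2, ?_⟩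
    · simp only [Function.comp, hψ0, hφe0]
    · simp only [Function.comp, hψK, hφeK]
    · intro k hk
      exact chain_lt φe (K+1) hφemono _ _ (hψmono k hk) (hψle (k+1) (by omega))
    · calc ∑ k ∈ Finset.range K', τ' k * (a ((φe ∘ ψ) (k+1)) - a ((φe ∘ ψ) k))
          = ∑ k ∈ Finset.range (K+1), σe k * (a (φe (k+1)) - a (φe k)) := hsum2
        _ = ∑ j ∈ Finset.range (J+1), σ j * (a (j+1) - a j) := by
          rw [Finset.sum_range_succ, Finset.sum_range_succ (n := J)]
          have he : ∀ k ∈ Finset.range K, σe k * (a (φe (k+1)) - a (φe k))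
              = σ' k * (a (φ (k+1)) - a (φ k)) := by
            intro k hk
            rw [Finset.mem_range] at hk
            simp only [hσe, hφe, if_neg (by omega : k ≠ K), if_neg (by omega : k ≠ K+1),
              if_neg (by omega : k+1 ≠ K+1)]
          rw [Finset.sum_congr rfl he, hsum]
          simp only [hσe, hφe, if_pos rfl, if_neg (by omega : K ≠ K+1), hφK, hφeK]
end

section
/- Let B₀ be a closed ball in ℝ^d and fix t, K, c > 0 and δ ≥ 0. Then the set of pairs (x, ν) ∈ B₀ × P(B₀) such that (x, ν) have (t, K, c, δ)-thin tubes is compact in the product of B₀ with the weak topology on probability measures. Here (x, ν) have (t, K, c, δ)-thin tubes if there exists a Borel measure ν' absolutely continuous with respect to ν with density bounded by 1, total mass at least c, and ν'(T) ≤ K r^t for every open r-tube T through x with r > δ. -/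
/-!
The set is the projection of the triples `(x, μ, ν')` in which `ν'` witnesses the thin tubes.
These triples lie in `B₀ × {μ | μ(B₀ᶜ) = 0} × {ν' | ν'(univ) ≤ 1, ν'(B₀ᶜ) = 0}`, which is compact by
Prokhorov's theorem, and are cut out there by closed conditions: `ν' ≤ μ` is tested against bounded
continuous functions, the mass is continuous, and the tube bounds pass to weak limits because the
measure of an open set can only drop in the limit, while the open `s`-tube around a line through
`x`, for `s < r`, lies in the `r`-tube around the parallel line through any point close to `x`.
The `r`-tube is the increasing union of these `s`-tubes.
-/

open MeasureTheory Metric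
open scoped ENNReal

/-- `T` is an open `r`-tube through `x`: the open `r`-neighborhood of a line through `x`. -/
def IsTube {F : Type*} [NormedAddCommGroup F] [NormedSpace ℝ F]
    (r : ℝ) (x : F) (T : Set F) : Prop :=
  ∃ v : F, v ≠ 0 ∧ T = Metric.thickening r {y | ∃ t : ℝ, y = x + t • v}

/-- `(x, ν)` have `(t, K, c, δ)`-thin tubes: there is a measure `ν' ≪ ν` with density
bounded by `1`, total mass at least `c`, and `ν'(T) ≤ K r^t` for all open `r`-tubes `T`
through `x` with `r > δ`. -/
def HasThinTubesPt {F : Type*} [NormedAddCommGroup F] [NormedSpace ℝ F]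
    [MeasurableSpace F] (x : F) (ν : Measure F) (t K c δ : ℝ) : Prop :=
  ∃ ν' : Measure F, ν' ≤ ν ∧ ENNReal.ofReal c ≤ ν' Set.univ ∧
    ∀ (r : ℝ) (T : Set F), δ < r → IsTube r x T → ν' T ≤ ENNReal.ofReal (K * r ^ t)

open Filter Topology Set TopologicalSpace BoundedContinuousFunction
open scoped NNReal

namespace MeasureTheory

variable {Ω : Type*} [MeasurableSpace Ω] [TopologicalSpace Ω]

theorem FiniteMeasure.measure_le_of_tendsto_of_isOpen [HasOuterApproxClosed Ω]
    [OpensMeasurableSpace Ω] {ι : Type*} {L : Filter ι} [L.NeBot] {μs : ι → FiniteMeasure Ω}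
    {μ : FiniteMeasure Ω} (hμ : Tendsto μs L (𝓝 μ)) {G : Set Ω} (hG : IsOpen G) {C : ℝ≥0∞}
    (hC : ∀ᶠ i in L, (μs i : Measure Ω) G ≤ C) : (μ : Measure Ω) G ≤ C := by
  have hmass : Tendsto (fun i ↦ (μs i : Measure Ω) univ) L (𝓝 ((μ : Measure Ω) univ)) := by
    simpa only [Function.comp_def, FiniteMeasure.ennreal_mass] using
      (ENNReal.continuous_coe.tendsto _).comp hμ.mass
  have hcompl : (μ : Measure Ω) univ - C ≤ (μ : Measure Ω) Gᶜ :=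
    calc (μ : Measure Ω) univ - C = L.limsup fun i ↦ (μs i : Measure Ω) univ - C :=
          (ENNReal.Tendsto.sub hmass tendsto_const_nhds
            (.inl (measure_ne_top _ _))).limsup_eq.symm
      _ ≤ L.limsup fun i ↦ (μs i : Measure Ω) Gᶜ := by
          refine limsup_le_limsup (hC.mono fun i hi ↦ ?_)
          rw [tsub_le_iff_left]
          calc (μs i : Measure Ω) univ ≤ (μs i : Measure Ω) G + (μs i : Measure Ω) Gᶜ := by
                rw [← union_compl_self G]; exact measure_union_le _ _
            _ ≤ C + (μs i : Measure Ω) Gᶜ := by gcongr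
      _ ≤ (μ : Measure Ω) Gᶜ :=
          FiniteMeasure.limsup_measure_closed_le_of_tendsto hμ hG.isClosed_compl
  calc (μ : Measure Ω) G = (μ : Measure Ω) univ - (μ : Measure Ω) Gᶜ := by
        rw [← measure_compl hG.measurableSet.compl (measure_ne_top _ _), compl_compl]
    _ ≤ (μ : Measure Ω) univ - ((μ : Measure Ω) univ - C) := by gcongr
    _ ≤ C := tsub_tsub_le

theorem Measure.le_iff_forall_lintegral_le [PseudoMetrizableSpace Ω] [BorelSpace Ω]
    {ν μ : Measure Ω} [IsFiniteMeasure ν] [IsFiniteMeasure μ] :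
    ν ≤ μ ↔ ∀ f : Ω →ᵇ ℝ≥0, ∫⁻ x, f x ∂ν ≤ ∫⁻ x, f x ∂μ := by
  refine ⟨fun h f ↦ lintegral_mono' h le_rfl, fun h ↦ ?_⟩
  have hclosed {F : Set Ω} (hF : IsClosed F) : ν F ≤ μ F :=
    le_of_tendsto_of_tendsto' (HasOuterApproxClosed.tendsto_lintegral_apprSeq hF ν)
      (HasOuterApproxClosed.tendsto_lintegral_apprSeq hF μ) fun n ↦ h _
  refine Measure.le_iff.2 fun A hA ↦ ?_
  rw [hA.measure_eq_iSup_isClosed_of_ne_top (measure_ne_top ν A)]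
  exact iSup₂_le fun F hFA ↦ iSup_le fun hF ↦ (hclosed hF).trans (measure_mono hFA)

theorem FiniteMeasure.isClosed_setOf_toMeasure_le [PseudoMetrizableSpace Ω] [BorelSpace Ω] :
    IsClosed {p : FiniteMeasure Ω × FiniteMeasure Ω | (p.1 : Measure Ω) ≤ p.2} := by
  simp only [Measure.le_iff_forall_lintegral_le, ofPred_forall]
  exact isClosed_iInter fun f ↦ isClosed_le
    ((continuous_lintegral_boundedContinuousFunction f).comp continuous_fst)
    ((continuous_lintegral_boundedContinuousFunction f).comp continuous_snd)

theorem ProbabilityMeasure.isCompact_setOf_null_compl [T2Space Ω] [BorelSpace Ω] {K : Set Ω}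
    (hK : IsCompact K) : IsCompact {μ : ProbabilityMeasure Ω | (μ : Measure Ω) Kᶜ = 0} := by
  simpa [ProbabilityMeasure.null_iff_toMeasure_null] using
    isCompact_setOfPred_probabilityMeasure_mass_eq_compl_isCompact_le (u := 0) (K := fun _ ↦ K)
      tendsto_const_nhds (fun _ ↦ hK) (.inr monotone_const)

theorem FiniteMeasure.isCompact_setOf_univ_le_one_null_compl [T2Space Ω] [BorelSpace Ω]
    {K : Set Ω} (hK : IsCompact K) :
    IsCompact {ν : FiniteMeasure Ω | (ν : Measure Ω) univ ≤ 1 ∧ (ν : Measure Ω) Kᶜ = 0} := by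
  simpa [FiniteMeasure.null_iff_toMeasure_null, ← FiniteMeasure.ennreal_mass] using
    isCompact_setOfPred_finiteMeasure_le_of_isCompact 1 hK

end MeasureTheory

theorem Metric.measure_thickening_le_of_forall_lt {X : Type*} [PseudoMetricSpace X]
    [MeasurableSpace X] {μ : Measure X} {A : Set X} {r : ℝ} {C : ℝ≥0∞}
    (h : ∀ s < r, μ (thickening s A) ≤ C) : μ (thickening r A) ≤ C := by
  have hunion : thickening r A = ⋃ n : ℕ, thickening (r - 1 / (n + 1)) A := by
    refine Subset.antisymm (fun y hy ↦ ?_)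
      (iUnion_subset fun n ↦ thickening_mono (sub_le_self r Nat.one_div_pos_of_nat.le) _)
    obtain ⟨z, hzA, hyz⟩ := mem_thickening_iff.1 hy
    obtain ⟨n, hn⟩ := exists_nat_one_div_lt (sub_pos.2 hyz)
    exact mem_iUnion.2 ⟨n, mem_thickening_iff.2 ⟨z, hzA, by linarith⟩⟩
  have hmono : Monotone fun n : ℕ ↦ thickening (r - 1 / (n + 1)) A := fun m n hmn ↦
    thickening_mono (sub_le_sub_left (Nat.one_div_le_one_div hmn) r) A
  rw [hunion, hmono.measure_iUnion]
  exact iSup_le fun n ↦ h _ (sub_lt_self r Nat.one_div_pos_of_nat)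

section Tubes

variable {F : Type*} [NormedAddCommGroup F] [NormedSpace ℝ F]

theorem thickening_line_subset_thickening_line {x y v : F} {s r : ℝ} (h : dist x y + s ≤ r) :
    thickening s {z | ∃ τ : ℝ, z = x + τ • v} ⊆ thickening r {z | ∃ τ : ℝ, z = y + τ • v} := by
  intro z hz
  obtain ⟨_, ⟨τ, rfl⟩, hzw⟩ := mem_thickening_iff.1 hz
  refine mem_thickening_iff.2 ⟨y + τ • v, ⟨τ, rfl⟩, ?_⟩
  calc dist z (y + τ • v) ≤ dist z (x + τ • v) + dist (x + τ • v) (y + τ • v) := dist_triangle ..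
    _ < r := by rw [dist_add_right]; linarith

variable [MeasurableSpace F] [BorelSpace F]

theorem isClosed_setOf_forall_isTube_measure_le (δ : ℝ) (φ : ℝ → ℝ≥0∞) :
    IsClosed {p : F × FiniteMeasure F |
      ∀ (r : ℝ) (T : Set F), δ < r → IsTube r p.1 T → (p.2 : Measure F) T ≤ φ r} := by
  rw [isClosed_iff_ultrafilter]
  rintro q u hu hmem r T hr ⟨v, hv, rfl⟩
  refine measure_thickening_le_of_forall_lt fun s hs ↦ ?_
  refine FiniteMeasure.measure_le_of_tendsto_of_isOpen
    ((continuous_snd.tendsto q).mono_left hu) isOpen_thickening ?_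
  filter_upwards [hmem, (continuous_fst.tendsto q).mono_left hu (ball_mem_nhds q.1 (sub_pos.2 hs))]
    with p hp hpq
  refine (measure_mono (thickening_line_subset_thickening_line ?_)).trans (hp r _ hr ⟨v, hv, rfl⟩)
  rw [dist_comm]; linarith [mem_ball.1 hpq]

theorem isCompact_setOf_hasThinTubesPt {B : Set F} (hB : IsCompact B) (t K c δ : ℝ) :
    IsCompact {p : F × ProbabilityMeasure F |
      p.1 ∈ B ∧ (p.2 : Measure F) Bᶜ = 0 ∧ HasThinTubesPt p.1 (p.2 : Measure F) t K c δ} := by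
  set S : Set (F × ProbabilityMeasure F × FiniteMeasure F) :=
    (B ×ˢ {μ : ProbabilityMeasure F | (μ : Measure F) Bᶜ = 0} ×ˢ
      {ν : FiniteMeasure F | (ν : Measure F) univ ≤ 1 ∧ (ν : Measure F) Bᶜ = 0}) ∩
    {q | (q.2.2 : Measure F) ≤ q.2.1 ∧ ENNReal.ofReal c ≤ (q.2.2 : Measure F) univ ∧
      ∀ (r : ℝ) (T : Set F), δ < r → IsTube r q.1 T →
        (q.2.2 : Measure F) T ≤ ENNReal.ofReal (K * r ^ t)}
  have hS : IsCompact S := by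
    refine (hB.prod ((ProbabilityMeasure.isCompact_setOf_null_compl hB).prod
      (FiniteMeasure.isCompact_setOf_univ_le_one_null_compl hB))).inter_right ?_
    simp only [ofPred_and, ← FiniteMeasure.ennreal_mass]
    refine .inter ?_ (.inter ?_ ?_)
    · exact FiniteMeasure.isClosed_setOf_toMeasure_le.preimage
        (f := fun q : F × ProbabilityMeasure F × FiniteMeasure F ↦ (q.2.2, q.2.1.toFiniteMeasure))
        (by fun_prop)
    · exact isClosed_le continuous_const (by fun_prop)
    · exact (isClosed_setOf_forall_isTube_measure_le δ _).preimage
        (f := fun q : F × ProbabilityMeasure F × FiniteMeasure F ↦ (q.1, q.2.2)) (by fun_prop)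
  convert hS.image (f := fun q ↦ (q.1, q.2.1)) (by fun_prop)
  ext p
  constructor
  · rintro ⟨hx, hμ, ν, hνμ, hν⟩
    have : IsFiniteMeasure ν := isFiniteMeasure_of_le _ hνμ
    refine ⟨(p.1, p.2, ⟨ν, this⟩), ⟨⟨hx, hμ, ?_, ?_⟩, hνμ, hν⟩, rfl⟩
    · simpa using hνμ univ
    · exact nonpos_iff_eq_zero.1 ((hνμ _).trans hμ.le)
  · rintro ⟨q, ⟨⟨hx, hμ, -⟩, hνμ, hν⟩, rfl⟩
    exact ⟨hx, hμ, q.2.2, hνμ, hν⟩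

end Tubes

theorem thinTubes_set_isCompact_general (d : ℕ) (x₀ : EuclideanSpace ℝ (Fin d)) (R : ℝ)
    (t K c δ : ℝ) :
    IsCompact {p : (EuclideanSpace ℝ (Fin d)) × ProbabilityMeasure (EuclideanSpace ℝ (Fin d)) |
      p.1 ∈ Metric.closedBall x₀ R ∧
      (p.2 : Measure (EuclideanSpace ℝ (Fin d))) (Metric.closedBall x₀ R)ᶜ = 0 ∧
      HasThinTubesPt p.1 (p.2 : Measure (EuclideanSpace ℝ (Fin d))) t K c δ} :=
  isCompact_setOf_hasThinTubesPt (isCompact_closedBall x₀ R) t K c δ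

/-- For a closed ball `B₀ = closedBall x₀ R` in `ℝ^d` and parameters `t, K, c > 0`,
`δ ≥ 0`, the set of pairs `(x, ν) ∈ B₀ × P(B₀)` having `(t, K, c, δ)`-thin tubes is
compact (in the product of `B₀` with the topology of weak convergence). -/
theorem thinTubes_set_isCompact (d : ℕ) (x₀ : EuclideanSpace ℝ (Fin d)) (R : ℝ)
    (hR : 0 < R) (t K c δ : ℝ) (ht : 0 < t) (hK : 0 < K) (hc : 0 < c) (hδ : 0 ≤ δ) :
    IsCompact {p : (EuclideanSpace ℝ (Fin d)) × ProbabilityMeasure (EuclideanSpace ℝ (Fin d)) |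
      p.1 ∈ Metric.closedBall x₀ R ∧
      (p.2 : Measure (EuclideanSpace ℝ (Fin d))) (Metric.closedBall x₀ R)ᶜ = 0 ∧
      HasThinTubesPt p.1 (p.2 : Measure (EuclideanSpace ℝ (Fin d))) t K c δ} :=
  thinTubes_set_isCompact_general d x₀ R t K c δ
end
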